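/- arXiv:2407.19725 — 4 statements merged into one kernel-verified Lean document; each statement's English description precedes it below -/
import Mathlib

section
/- For all c ≥ 0, the function ρ(c) = ((1+√c)/√2) · √((2+c+√(c²+4c))/(1+c+√(c²+4c))) satisfies ρ(c) ≥ 1. -/
noncomputable def rho (c : ℝ) : ℝ :=
  ((1 + Real.sqrt c) / Real.sqrt 2) *
    Real.sqrt ((2 + c + Real.sqrt (c ^ 2 + 4 * c)) / (1 + c + Real.sqrt (c ^ 2 + 4 * c)))

theorem rho_ge_one : ∀ c : ℝ, 0 ≤ c → 1 ≤ rho c := by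
  intro c hc
  set s := Real.sqrt c with hs
  set t := Real.sqrt (c ^ 2 + 4 * c) with ht
  have hs0 : 0 ≤ s := Real.sqrt_nonneg c
  have hs2 : s ^ 2 = c := Real.sq_sqrt hc
  have ht0 : 0 ≤ t := Real.sqrt_nonneg _
  have ht2 : t ^ 2 = c ^ 2 + 4 * c := Real.sq_sqrt (by nlinarith)
  have hd : (0:ℝ) < 1 + c + t := by nlinarith
  have hX0 : (0:ℝ) ≤ (2 + c + t) / (1 + c + t) := by positivity
  have hts : t ≤ c + 2 * s := by nlinarith [sq_nonneg (t - (c + 2*s)), sq_nonneg s]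
  have hkey : 2 * (1 + c + t) ≤ (1 + s) ^ 2 * (2 + c + t) := by nlinarith
  have hr0 : 0 ≤ rho c := by
    unfold rho
    positivity
  have hr2 : 1 ≤ rho c ^ 2 := by
    unfold rho
    rw [mul_pow, div_pow, Real.sq_sqrt hX0, Real.sq_sqrt (by norm_num : (0:ℝ) ≤ 2)]
    rw [div_mul_div_comm, le_div_iff₀ (by positivity)]
    nlinarith
  nlinarith
end

section
/- The function ρ(c) = ((1+√c)/√2) · √((2+c+√(c²+4c))/(1+c+√(c²+4c))) is monotonically increasing on [0, ∞). -/
private lemma rho_eq (c : ℝ) (hc : 0 ≤ c) :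
    rho c = ((Real.sqrt c + Real.sqrt (c + 4)) ^ 2 + 2 * (Real.sqrt c + Real.sqrt (c + 4)) - 4) /
      (2 * Real.sqrt 2 * Real.sqrt ((Real.sqrt c + Real.sqrt (c + 4)) ^ 2 - 2)) := by
  set a := Real.sqrt c with hadef
  set b := Real.sqrt (c + 4) with hbdef
  have ha0 : 0 ≤ a := Real.sqrt_nonneg _
  have hb0 : 0 ≤ b := Real.sqrt_nonneg _
  have ha2 : a ^ 2 = c := Real.sq_sqrt hc
  have hb2 : b ^ 2 = c + 4 := Real.sq_sqrt (by linarith)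
  have hb2' : 2 ≤ b := by nlinarith [hb2, hb0]
  have hs : Real.sqrt (c ^ 2 + 4 * c) = a * b := by
    rw [show c ^ 2 + 4 * c = c * (c + 4) by ring, Real.sqrt_mul hc]
  have hw0 : 0 < a + b := by linarith
  have hw2 : (a + b) ^ 2 = 2 * c + 4 + 2 * (a * b) := by
    have : (a + b) ^ 2 = a ^ 2 + b ^ 2 + 2 * (a * b) := by ring
    rw [this, ha2, hb2]; ring
  have hnum : 2 + c + Real.sqrt (c ^ 2 + 4 * c) = (a + b) ^ 2 / 2 := by
    rw [hs]; linarith [hw2]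
  have hden : 1 + c + Real.sqrt (c ^ 2 + 4 * c) = ((a + b) ^ 2 - 2) / 2 := by
    rw [hs]; linarith [hw2]
  have hab0 : 0 ≤ a * b := mul_nonneg ha0 hb0
  have hdpos : 0 < (a + b) ^ 2 - 2 := by nlinarith
  have hsqden : 0 < Real.sqrt ((a + b) ^ 2 - 2) := Real.sqrt_pos.2 hdpos
  have hratio : (2 + c + Real.sqrt (c ^ 2 + 4 * c)) / (1 + c + Real.sqrt (c ^ 2 + 4 * c)) =
      (a + b) ^ 2 / ((a + b) ^ 2 - 2) := by
    rw [hnum, hden]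
    field_simp
  have hsqrt : Real.sqrt ((a + b) ^ 2 / ((a + b) ^ 2 - 2)) =
      (a + b) / Real.sqrt ((a + b) ^ 2 - 2) := by
    rw [Real.sqrt_div (by positivity), Real.sqrt_sq hw0.le]
  have haw : 2 * (a * (a + b)) = (a + b) ^ 2 - 4 := by
    have h1 : a * (a + b) = c + a * b := by
      have : a * (a + b) = a ^ 2 + a * b := by ring
      rw [this, ha2]
    rw [h1]; linarith [hw2]
  have h2 : (0:ℝ) < Real.sqrt 2 := Real.sqrt_pos.2 (by norm_num)
  have hprod : (1 + a) * (a + b) = ((a + b) ^ 2 + 2 * (a + b) - 4) / 2 := by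
    linear_combination haw / 2
  rw [rho, hratio, hsqrt, div_mul_div_comm, hprod]
  rw [div_div]
  congr 1
  ring

private lemma g_lt (x y : ℝ) (hx : 2 ≤ x) (hxy : x < y) :
    (x ^ 2 + 2 * x - 4) / (2 * Real.sqrt 2 * Real.sqrt (x ^ 2 - 2)) <
    (y ^ 2 + 2 * y - 4) / (2 * Real.sqrt 2 * Real.sqrt (y ^ 2 - 2)) := by
  have hy : 2 ≤ y := by linarith
  have hx2 : (0:ℝ) < x ^ 2 - 2 := by nlinarith
  have hy2 : (0:ℝ) < y ^ 2 - 2 := by nlinarith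
  have h2 : (0:ℝ) < Real.sqrt 2 := Real.sqrt_pos.2 (by norm_num)
  have hsx : 0 < Real.sqrt (x ^ 2 - 2) := Real.sqrt_pos.2 hx2
  have hsy : 0 < Real.sqrt (y ^ 2 - 2) := Real.sqrt_pos.2 hy2
  have hnx : (0:ℝ) < x ^ 2 + 2 * x - 4 := by nlinarith
  rw [div_lt_div_iff₀ (by positivity) (by positivity)]
  have key : (x ^ 2 + 2 * x - 4) * Real.sqrt (y ^ 2 - 2) <
      (y ^ 2 + 2 * y - 4) * Real.sqrt (x ^ 2 - 2) := by
    have l1 : (x ^ 2 + 2 * x - 4) * Real.sqrt (y ^ 2 - 2) =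
        Real.sqrt ((x ^ 2 + 2 * x - 4) ^ 2 * (y ^ 2 - 2)) := by
      rw [Real.sqrt_mul (sq_nonneg _), Real.sqrt_sq hnx.le]
    have l2 : (y ^ 2 + 2 * y - 4) * Real.sqrt (x ^ 2 - 2) =
        Real.sqrt ((y ^ 2 + 2 * y - 4) ^ 2 * (x ^ 2 - 2)) := by
      rw [Real.sqrt_mul (sq_nonneg _), Real.sqrt_sq (by nlinarith)]
    rw [l1, l2]
    apply Real.sqrt_lt_sqrt (by positivity)
    have ha : 0 ≤ x - 2 := by linarith
    have hd : 0 < y - x := by linarith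
    nlinarith [mul_nonneg ha ha, mul_nonneg ha hd.le, mul_pos hd hd,
      mul_nonneg (mul_nonneg ha ha) ha, mul_nonneg (mul_nonneg ha ha) hd.le,
      mul_nonneg (mul_nonneg ha hd.le) hd.le, mul_pos (mul_pos hd hd) hd, ha, hd.le]
  calc (x ^ 2 + 2 * x - 4) * (2 * Real.sqrt 2 * Real.sqrt (y ^ 2 - 2))
      = 2 * Real.sqrt 2 * ((x ^ 2 + 2 * x - 4) * Real.sqrt (y ^ 2 - 2)) := by ring
    _ < 2 * Real.sqrt 2 * ((y ^ 2 + 2 * y - 4) * Real.sqrt (x ^ 2 - 2)) := by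
        exact mul_lt_mul_of_pos_left key (by positivity)
    _ = (y ^ 2 + 2 * y - 4) * (2 * Real.sqrt 2 * Real.sqrt (x ^ 2 - 2)) := by ring

theorem rho_strictMonoOn : StrictMonoOn rho (Set.Ici (0 : ℝ)) := by
  intro a ha b hb hab
  simp only [Set.mem_Ici] at ha hb
  rw [rho_eq a ha, rho_eq b hb]
  set wa := Real.sqrt a + Real.sqrt (a + 4) with hwa
  set wb := Real.sqrt b + Real.sqrt (b + 4) with hwb
  have hwa2 : 2 ≤ wa := by
    have h1 : (Real.sqrt (a + 4)) ^ 2 = a + 4 := Real.sq_sqrt (by linarith)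
    have h2 : 0 ≤ Real.sqrt (a + 4) := Real.sqrt_nonneg _
    have h3 : 0 ≤ Real.sqrt a := Real.sqrt_nonneg _
    have h4 : 2 ≤ Real.sqrt (a + 4) := by nlinarith
    rw [hwa]; linarith
  have hlt : wa < wb := by
    have h1 : Real.sqrt a < Real.sqrt b := Real.sqrt_lt_sqrt ha hab
    have h2 : Real.sqrt (a + 4) < Real.sqrt (b + 4) := Real.sqrt_lt_sqrt (by linarith) (by linarith)
    rw [hwa, hwb]; linarith
  exact g_lt wa wb hwa2 hlt
end

section
/- For λ > σ² > 0 and c > 0, the PCA limiting value ψ'(λ) = λ(1 + cσ²/(λ-σ²)) strictly exceeds the PPCA limiting value ψ(λ) = λ(1 + 2cσ⁴/(λ²-σ⁴)), and ψ(λ) strictly exceeds λ. -/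
theorem psi_chain (c σ2 lam : ℝ) (hc : 0 < c) (hσ : 0 < σ2) (hlam : σ2 < lam) :
    lam < lam * (1 + 2 * c * σ2 ^ 2 / (lam ^ 2 - σ2 ^ 2)) ∧
      lam * (1 + 2 * c * σ2 ^ 2 / (lam ^ 2 - σ2 ^ 2)) <
        lam * (1 + c * σ2 / (lam - σ2)) := by
  have hl : 0 < lam := hσ.trans hlam
  have h1 : 0 < lam - σ2 := by linarith
  have h2 : 0 < lam ^ 2 - σ2 ^ 2 := by nlinarith
  constructor
  · have : 0 < 2 * c * σ2 ^ 2 / (lam ^ 2 - σ2 ^ 2) := by positivity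
    nlinarith
  · have key : 2 * c * σ2 ^ 2 / (lam ^ 2 - σ2 ^ 2) < c * σ2 / (lam - σ2) := by
      rw [div_lt_div_iff₀ h2 h1]
      nlinarith [mul_pos (mul_pos hc hσ) (mul_pos h1 h1)]
    nlinarith
end

section
/- Let 0 < ε, K₁, K₂ ∈ ℕ with K = K₁+K₂, 2Kε < 1, and λ₁ > 1. If λ₁ > (1-2K₂ε)/(1-2K₁ε), then the PPCA ordering threshold (1-2K₁ε)(λ₁²-1)/(2ε) is strictly greater than the PCA ordering threshold (1-Kε)(λ₁-1)/ε. -/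
theorem ppca_ordering_threshold_gt (ε lam1 : ℝ) (K1 K2 K : ℕ) (hε : 0 < ε)
    (hK : K = K1 + K2) (hKe : 2 * K * ε < 1) (hlam : 1 < lam1)
    (hcond : (1 - 2 * K2 * ε) / (1 - 2 * K1 * ε) < lam1) :
    (1 - K * ε) * (lam1 - 1) / ε < (1 - 2 * K1 * ε) * (lam1 ^ 2 - 1) / (2 * ε) := by
  have hKc : (K : ℝ) = K1 + K2 := by exact_mod_cast congrArg (Nat.cast : ℕ → ℝ) hK
  have hK1 : (0:ℝ) ≤ K1 := Nat.cast_nonneg _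
  have hK2 : (0:ℝ) ≤ K2 := Nat.cast_nonneg _
  have hpos : (0:ℝ) < 1 - 2 * K1 * ε := by nlinarith
  have hcond' : 1 - 2 * K2 * ε < lam1 * (1 - 2 * K1 * ε) := by
    rwa [div_lt_iff₀ hpos] at hcond
  rw [div_lt_div_iff₀ hε (by linarith : (0:ℝ) < 2 * ε)]
  have key := mul_pos (sub_pos.mpr hcond') (mul_pos hε (sub_pos.mpr hlam))
  rw [hKc]
  nlinarith [key]
end
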